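/- Let S = k⟦x,y⟧ with maximal ideal n, let f ∈ n with f ∈ n^e \ n^{e+1}, and let R = S/(f) with maximal ideal m. Let g = gℓℓ(R), let i ≥ 0 be an integer, and let z ∈ m be an element with m^g ⊆ (z). If gℓℓ(R) ≤ e + i, then ord_R(z) ≤ i + 1. -/

import Mathlib

/-!
Suppose `ord z ≥ i + 2` and lift `z` to `Z ∈ 𝔫 ^ (i + 2)`. Then `𝔫 ^ (e + i) ⊆ (f, Z)`, so `f, Z`
is a regular sequence in `k⟦x,y⟧`: since `(f)` has no embedded component, `α f + β Z = 0` forces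
`f ∣ β`. Writing `f = a x + b y` and `Z = c x + d y` with `a, b ∈ 𝔫 ^ (e - 1)` and
`c, d ∈ 𝔫 ^ (i + 1)`, the determinant `a d - b c` lies in `𝔫 ^ (e + i) ⊆ (f, Z)`. But for a
regular sequence contained in `(x, y)` this determinant (Wiebe's socle generator) never lies in
`(f, Z)`.
-/

/-- A system of parameters for `R` relative to the ideal `m` (intended to be the maximal
ideal of the local ring `R`): a finite set whose cardinality is the Krull dimension of `R`
and which generates an `m`-primary ideal. -/
def IsSOP (R : Type*) [CommRing R] (m : Ideal R) (s : Set R) : Prop :=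
  s.Finite ∧ ringKrullDim R = (s.ncard : WithBot ℕ∞) ∧ ∃ N : ℕ, m ^ N ≤ Ideal.span s

/-- The generalized Loewy length of `R` relative to the ideal `m` (intended to be the
maximal ideal of the local ring `R`): the smallest positive integer `n` such that `m ^ n`
is contained in an ideal generated by a system of parameters. -/
noncomputable def gll (R : Type*) [CommRing R] (m : Ideal R) : ℕ :=
  sInf {n : ℕ | 0 < n ∧ ∃ s : Set R, IsSOP R m s ∧ m ^ n ≤ Ideal.span s}

set_option synthInstance.maxHeartbeats 1000000
set_option maxHeartbeats 1000000

open IsLocalRing MvPowerSeries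

namespace Ideal

theorem exists_eq_mul_add_mul_of_mem_span_pair_pow_succ {R : Type*} [CommSemiring R]
    {x y φ : R} {j : ℕ} (h : φ ∈ span {x, y} ^ (j + 1)) :
    ∃ a ∈ span {x, y} ^ j, ∃ b ∈ span {x, y} ^ j, φ = a * x + b * y := by
  have hI : span {x, y} ^ (j + 1) = span {x, y} ^ j * span {x} ⊔ span {x, y} ^ j * span {y} := by
    rw [pow_succ, span_insert, mul_sup]
  rw [hI] at h
  obtain ⟨u, hu, v, hv, rfl⟩ := Submodule.mem_sup.mp h
  obtain ⟨a, ha, rfl⟩ := mem_mul_span_singleton.mp hu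
  obtain ⟨b, hb, rfl⟩ := mem_mul_span_singleton.mp hv
  exact ⟨a, ha, b, hb, rfl⟩

theorem pow_le_span_pair_of_map_pow_le_span_singleton {R : Type*} [CommRing R] {f g : R}
    {I : Ideal R} {N : ℕ}
    (h : I.map (Quotient.mk (span {f})) ^ N ≤ span {Quotient.mk (span {f}) g}) :
    I ^ N ≤ span {f, g} := by
  rw [← Ideal.map_pow, ← Set.image_singleton, ← map_span, map_le_iff_le_comap,
    comap_map_of_surjective _ Quotient.mk_surjective, ← RingHom.ker_eq_comap_bot, mk_ker] at h
  rwa [span_insert, sup_comm]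

end Ideal

namespace MvPowerSeries

theorem X_dvd_of_X_mul_eq_X_mul {σ R : Type*} [CommSemiring R] {i j : σ} (hij : i ≠ j)
    {u v : MvPowerSeries σ R} (h : X j * u = X i * v) : X i ∣ u := by
  classical
  refine X_dvd_iff.mpr fun s hs => ?_
  have := X_dvd_iff.mp (dvd_mul_right (X i) v) (Finsupp.single j 1 + s) (by simp [hs, hij])
  rwa [← h, X_def, coeff_add_monomial_mul, one_mul] at this

theorem mem_span_singleton_of_X_mul_mem {σ R : Type*} [CommRing R] [IsDomain R] {i j : σ}
    (hij : i ≠ j) {f w : MvPowerSeries σ R} (hf : f ≠ 0)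
    (hi : X i * w ∈ Ideal.span {f}) (hj : X j * w ∈ Ideal.span {f}) :
    w ∈ Ideal.span {f} := by
  obtain ⟨u, hu⟩ := Ideal.mem_span_singleton'.mp hi
  obtain ⟨v, hv⟩ := Ideal.mem_span_singleton'.mp hj
  have hvu : X j * u = X i * v :=
    mul_right_cancel₀ hf (by linear_combination X j * hu - X i * hv)
  obtain ⟨t, rfl⟩ := X_dvd_of_X_mul_eq_X_mul hij hvu
  have hXi : (X i : MvPowerSeries σ R) ≠ 0 := nonZeroDivisors.ne_zero X_mem_nonzeroDivisors
  exact Ideal.mem_span_singleton'.mpr ⟨t, mul_left_cancel₀ hXi (by linear_combination hu)⟩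

theorem ker_constantCoeff_eq_span_X_pair {R : Type*} [CommRing R] :
    RingHom.ker (constantCoeff (σ := Fin 2) (R := R)) = Ideal.span {X 0, X 1} := by
  refine le_antisymm (fun φ hφ => ?_) (Ideal.span_le.mpr ?_)
  · let ψ : MvPowerSeries (Fin 2) R := fun s => if s 0 = 0 then coeff s φ else 0
    have hψ : ∀ s, coeff s ψ = if s 0 = 0 then coeff s φ else 0 := fun _ => rfl
    obtain ⟨a, ha⟩ : X 0 ∣ φ - ψ := X_dvd_iff.mpr fun s hs => by simp [hψ, hs]
    obtain ⟨b, hb⟩ : X 1 ∣ ψ := X_dvd_iff.mpr fun s hs => by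
      by_cases hs0 : s 0 = 0
      · obtain rfl : s = 0 := by ext j; fin_cases j <;> assumption
        simpa [hψ] using hφ
      · simp [hψ, hs0]
    exact Ideal.mem_span_pair.mpr ⟨a, b, by linear_combination -ha - hb⟩
  · rintro _ (rfl | rfl) <;> simp

section Field

variable {k : Type*} [Field k]

local notation "𝔫" => IsLocalRing.maximalIdeal (MvPowerSeries (Fin 2) k)

theorem maximalIdeal_eq_span_X_pair : 𝔫 = Ideal.span {X 0, X 1} := by
  have hsurj : Function.Surjective (constantCoeff (σ := Fin 2) (R := k)) :=
    fun a => ⟨C a, by simp⟩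
  rw [← ker_constantCoeff_eq_span_X_pair,
    IsLocalRing.eq_maximalIdeal (RingHom.ker_isMaximal_of_surjective _ hsurj)]

theorem exists_eq_mul_X_add_mul_X_of_mem_pow_succ {φ : MvPowerSeries (Fin 2) k} {j : ℕ}
    (h : φ ∈ 𝔫 ^ (j + 1)) : ∃ a ∈ 𝔫 ^ j, ∃ b ∈ 𝔫 ^ j, φ = a * X 0 + b * X 1 := by
  rw [maximalIdeal_eq_span_X_pair] at h ⊢
  exact Ideal.exists_eq_mul_add_mul_of_mem_span_pair_pow_succ h

theorem mem_span_singleton_of_forall_mem_pow_mul_mem {f : MvPowerSeries (Fin 2) k} (hf : f ≠ 0)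
    (M : ℕ) {w : MvPowerSeries (Fin 2) k} (h : ∀ u ∈ 𝔫 ^ M, u * w ∈ Ideal.span {f}) :
    w ∈ Ideal.span {f} := by
  induction M generalizing w with
  | zero => simpa using h 1 (by simp)
  | succ M ih =>
    have hX : ∀ i, X i ∈ 𝔫 := fun i => by
      rw [maximalIdeal_eq_span_X_pair]
      fin_cases i <;> exact Ideal.subset_span (by simp)
    refine ih fun v hv => mem_span_singleton_of_X_mul_mem (i := 0) (j := 1) (by decide) hf ?_ ?_
    all_goals
      rw [← mul_assoc]
      exact h _ (pow_succ' 𝔫 M ▸ Ideal.mul_mem_mul (hX _) hv)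

theorem dvd_of_mul_add_mul_eq_zero {f g α β : MvPowerSeries (Fin 2) k} (hf : f ≠ 0) {N : ℕ}
    (hN : 𝔫 ^ N ≤ Ideal.span {f, g}) (h : α * f + β * g = 0) : f ∣ β := by
  rw [← Ideal.mem_span_singleton]
  refine mem_span_singleton_of_forall_mem_pow_mul_mem hf N fun u hu => ?_
  obtain ⟨p, q, hpq⟩ := Ideal.mem_span_pair.mp (hN hu)
  exact Ideal.mem_span_singleton'.mpr ⟨p * β - q * α, by linear_combination β * hpq - q * h⟩

/- Multiplying `a * d - b * c = P * f + Q * g` by `X 0` and by `X 1` gives two relations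
`α * f + β * g = 0` whose `g`-coefficients `-b - Q * X 0` and `a - Q * X 1` are therefore multiples
of `f`; substituting them into `f = a * X 0 + b * X 1` yields `f = f * h` with `h ∈ 𝔫`. -/
theorem mul_sub_mul_notMem_span_pair {f g a b c d : MvPowerSeries (Fin 2) k} (hf : f ≠ 0)
    {N : ℕ} (hN : 𝔫 ^ N ≤ Ideal.span {f, g})
    (hfab : f = a * X 0 + b * X 1) (hgcd : g = c * X 0 + d * X 1) :
    a * d - b * c ∉ Ideal.span {f, g} := by
  intro hdet
  obtain ⟨P, Q, hPQ⟩ := Ideal.mem_span_pair.mp hdet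
  obtain ⟨τ₁, hτ₁⟩ := dvd_of_mul_add_mul_eq_zero (α := d - P * X 0) (β := -b - Q * X 0) hf hN
    (by linear_combination d * hfab - b * hgcd - X 0 * hPQ)
  obtain ⟨τ₂, hτ₂⟩ := dvd_of_mul_add_mul_eq_zero (α := -c - P * X 1) (β := a - Q * X 1) hf hN
    (by linear_combination a * hgcd - c * hfab - X 1 * hPQ)
  have h : f * (1 - (τ₂ * X 0 - τ₁ * X 1)) = 0 := by
    linear_combination hfab + X 0 * hτ₂ - X 1 * hτ₁
  simpa using congrArg constantCoeff ((mul_eq_zero.mp h).resolve_left hf)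

end Field

end MvPowerSeries

theorem stmt_2_general {k : Type*} [Field k] (e i : ℕ)
    (f : MvPowerSeries (Fin 2) k)
    (n : Ideal (MvPowerSeries (Fin 2) k))
    (hn : n = maximalIdeal (MvPowerSeries (Fin 2) k))
    (hf0 : f ∈ n) (hfe : f ∈ n ^ e) (hfe' : f ∉ n ^ (e + 1))
    (m : Ideal (MvPowerSeries (Fin 2) k ⧸ Ideal.span {f}))
    (hm : m = n.map (Ideal.Quotient.mk (Ideal.span {f})))
    (z : MvPowerSeries (Fin 2) k ⧸ Ideal.span {f})
    (hwit : m ^ gll _ m ≤ Ideal.span {z})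
    (hgll : gll _ m ≤ e + i) :
    ∀ r : ℕ, z ∈ m ^ r → z ∉ m ^ (r + 1) → r ≤ i + 1 := by
  subst hn hm
  intro r hzr _
  by_contra! hr
  have hf : f ≠ 0 := by rintro rfl; exact hfe' (zero_mem _)
  have he : e ≠ 0 := by rintro rfl; exact hfe' (by simpa using hf0)
  obtain ⟨e, rfl⟩ := Nat.exists_eq_add_one_of_ne_zero he
  have hz : z ∈ (maximalIdeal _ ^ (i + 2)).map (Ideal.Quotient.mk (Ideal.span {f})) := by
    rw [Ideal.map_pow]
    exact Ideal.pow_le_pow_right hr hzr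
  obtain ⟨Z, hZ, rfl⟩ := (Ideal.mem_map_iff_of_surjective _ Ideal.Quotient.mk_surjective).mp hz
  have hspan : maximalIdeal _ ^ (e + 1 + i) ≤ Ideal.span {f, Z} :=
    Ideal.pow_le_span_pair_of_map_pow_le_span_singleton ((Ideal.pow_le_pow_right hgll).trans hwit)
  obtain ⟨a, ha, b, hb, hfab⟩ := MvPowerSeries.exists_eq_mul_X_add_mul_X_of_mem_pow_succ hfe
  obtain ⟨c, hc, d, hd, hZcd⟩ := MvPowerSeries.exists_eq_mul_X_add_mul_X_of_mem_pow_succ hZ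
  refine MvPowerSeries.mul_sub_mul_notMem_span_pair hf hspan hfab hZcd (hspan ?_)
  have hdet := Ideal.sub_mem _ (Ideal.mul_mem_mul ha hd) (Ideal.mul_mem_mul hb hc)
  rwa [← pow_add, show e + (i + 1) = e + 1 + i by omega] at hdet

/-- Let `S = k⟦x,y⟧` with maximal ideal `n`, `f ∈ n` with
`f ∈ n^e \ n^{e+1}`, and `R = S/(f)` with maximal ideal `m`.  Let `g = gℓℓ(R)`, `i ≥ 0`,
and `z ∈ m` with `m^g ⊆ (z)`.  If `gℓℓ(R) ≤ e + i` then `ord_R(z) ≤ i + 1`. -/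
theorem stmt_2 {k : Type*} [Field k] (e i : ℕ)
    (f : MvPowerSeries (Fin 2) k)
    (n : Ideal (MvPowerSeries (Fin 2) k))
    (hn : n = maximalIdeal (MvPowerSeries (Fin 2) k))
    (hf0 : f ∈ n) (hfe : f ∈ n ^ e) (hfe' : f ∉ n ^ (e + 1))
    (m : Ideal (MvPowerSeries (Fin 2) k ⧸ Ideal.span {f}))
    (hm : m = n.map (Ideal.Quotient.mk (Ideal.span {f})))
    (z : MvPowerSeries (Fin 2) k ⧸ Ideal.span {f}) (hz : z ∈ m)
    (hwit : m ^ gll _ m ≤ Ideal.span {z})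
    (hgll : gll _ m ≤ e + i) :
    ∀ r : ℕ, z ∈ m ^ r → z ∉ m ^ (r + 1) → r ≤ i + 1 :=
  stmt_2_general e i f n hn hf0 hfe hfe' m hm z hwit hgll
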